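/- For two unit vectors v1, v2 in R^2 with angle θ ∈ [0, π] between them, and a random line through the origin whose normal direction is uniform on the circle, the probability that both vectors lie strictly on the same side of the line is 1 - θ/π. -/

import Mathlib

/-!
Put `v₁, v₂` and the normal `h φ` at angles `a, b, φ`. Then
`⟪v₁, h φ⟫ ⟪v₂, h φ⟫ = cos (a - φ) cos (b - φ) = (cos θ + cos (2φ - (a + b))) / 2`,
which is positive iff `cos (π - θ) < cos (2φ - (a + b))`. As `φ` runs over `[0, 2π)`, the angle
`2φ - (a + b)` runs twice over a period of `cos`, and on the period `(-π, π]` the condition cuts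
out the interval `(-(π - θ), π - θ)`. Halving the doubled length gives measure `2(π - θ)`.
-/

open MeasureTheory Real Set
open scoped InnerProductSpace

noncomputable def unitVecAt (φ : ℝ) : EuclideanSpace ℝ (Fin 2) :=
  (WithLp.equiv 2 (Fin 2 → ℝ)).symm ![cos φ, sin φ]

theorem inner_unitVecAt (a b : ℝ) : ⟪unitVecAt a, unitVecAt b⟫_ℝ = cos (a - b) := by
  simp only [unitVecAt, WithLp.equiv_symm_apply, PiLp.inner_apply, RCLike.inner_apply,
    ringHom_apply, Fin.sum_univ_two, Fin.isValue, Matrix.cons_val_zero, Matrix.cons_val_one,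
    Matrix.cons_val_fin_one, cos_sub]
  ring

theorem exists_eq_unitVecAt {v : EuclideanSpace ℝ (Fin 2)} (hv : ‖v‖ = 1) :
    ∃ a, v = unitVecAt a := by
  set z : ℂ := v 0 + v 1 * Complex.I
  have hz : ‖z‖ = 1 := by
    rw [Complex.norm_add_mul_I, ← hv, EuclideanSpace.norm_eq, Fin.sum_univ_two]
    simp
  refine ⟨z.arg, ?_⟩
  ext i
  fin_cases i
  · simpa [unitVecAt, hz, z] using (Complex.norm_mul_cos_arg z).symm
  · simpa [unitVecAt, hz, z] using (Complex.norm_mul_sin_arg z).symm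

theorem volume_inter_Ioc_add_period {S : Set ℝ} (hS : MeasurableSet S) {T : ℝ} (hT : 0 < T)
    (hper : ∀ x, x + T ∈ S ↔ x ∈ S) (a b : ℝ) :
    volume (S ∩ Ioc a (a + T)) = volume (S ∩ Ioc b (b + T)) := by
  have : VAddInvariantMeasure (AddSubgroup.zmultiples T) ℝ volume :=
    ⟨fun c s _ => measure_preimage_add _ _ _⟩
  refine (isAddFundamentalDomain_Ioc hT a).measure_set_eq
    (isAddFundamentalDomain_Ioc hT b) hS fun ⟨_, n, rfl⟩ => ?_
  ext x
  have hperiodic : Function.Periodic (· ∈ S) T := fun x => propext (hper x)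
  simpa [add_comm] using ((hperiodic.zsmul n) x).to_iff

theorem volume_inter_Ioc_add_nsmul_period {S : Set ℝ} (hS : MeasurableSet S) {T : ℝ}
    (hT : 0 < T) (hper : ∀ x, x + T ∈ S ↔ x ∈ S) (n : ℕ) (a b : ℝ) :
    volume (S ∩ Ioc a (a + n * T)) = n * volume (S ∩ Ioc b (b + T)) := by
  induction n with
  | zero => simp
  | succ n ih =>
    have hsplit : Ioc a (a + (n + 1 : ℕ) * T)
        = Ioc a (a + n * T) ∪ Ioc (a + n * T) (a + n * T + T) := by
      push_cast
      rw [Ioc_union_Ioc_eq_Ioc (by nlinarith [n.cast_nonneg (α := ℝ)]) (by linarith)]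
      ring_nf
    rw [hsplit, inter_union_distrib_left, measure_union, ih,
      volume_inter_Ioc_add_period hS hT hper (a + n * T) b]
    · push_cast; ring
    · exact (Ioc_disjoint_Ioc_of_le le_rfl).mono inter_subset_right inter_subset_right
    · exact hS.inter measurableSet_Ioc

theorem setOf_cos_lt_cos_inter_Ioc {c : ℝ} (hc₀ : 0 ≤ c) (hcπ : c ≤ π) :
    {u | cos c < cos u} ∩ Ioc (-π) π = Ioo (-c) c := by
  ext u
  simp only [mem_inter_iff, mem_ofPred_eq, mem_Ioc, mem_Ioo]
  constructor
  · rintro ⟨hcos, hu⟩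
    have hu' : |u| ≤ π := abs_le.2 ⟨hu.1.le, hu.2⟩
    rw [← cos_abs u, strictAntiOn_cos.lt_iff_gt ⟨hc₀, hcπ⟩ ⟨abs_nonneg u, hu'⟩] at hcos
    exact abs_lt.1 hcos
  · intro hu
    have hu' : |u| < c := abs_lt.2 hu
    refine ⟨?_, by linarith, by linarith⟩
    rw [← cos_abs u]
    exact strictAntiOn_cos ⟨abs_nonneg u, by linarith⟩ ⟨hc₀, hcπ⟩ hu'

theorem volume_preimage_two_mul_sub (γ : ℝ) (s : Set ℝ) :
    volume ((fun φ => 2 * φ - γ) ⁻¹' s) = ENNReal.ofReal 2⁻¹ * volume s := by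
  have : (fun φ : ℝ => 2 * φ - γ) ⁻¹' s = (2 * ·) ⁻¹' ((· + -γ) ⁻¹' s) := by
    ext; simp [sub_eq_add_neg]
  rw [this, Real.volume_preimage_mul_left two_ne_zero, measure_preimage_add_right,
    abs_of_pos (by norm_num)]

theorem volume_setOf_cos_lt_cos_two_mul_sub {c : ℝ} (hc₀ : 0 ≤ c) (hcπ : c ≤ π) (γ : ℝ) :
    volume {φ ∈ Ico 0 (2 * π) | cos c < cos (2 * φ - γ)} = ENNReal.ofReal (2 * c) := by
  set S := {u | cos c < cos u}
  have hS : MeasurableSet S := measurableSet_lt measurable_const continuous_cos.measurable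
  have hper : ∀ x, x + 2 * π ∈ S ↔ x ∈ S := by simp [S, cos_add_two_pi]
  have hpre : {φ ∈ Ico 0 (2 * π) | cos c < cos (2 * φ - γ)}
      = (fun φ => 2 * φ - γ) ⁻¹' (S ∩ Ico (-γ) (-γ + (2 : ℕ) * (2 * π))) := by
    ext φ
    simp only [mem_ofPred_eq, mem_preimage, mem_inter_iff, mem_Ico, S]
    constructor
    · rintro ⟨⟨h0, h2⟩, hcos⟩
      exact ⟨hcos, by linarith, by push_cast; linarith⟩
    · rintro ⟨hcos, h0, h2⟩
      push_cast at h2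
      exact ⟨⟨by linarith, by linarith⟩, hcos⟩
  calc volume {φ ∈ Ico 0 (2 * π) | cos c < cos (2 * φ - γ)}
      = ENNReal.ofReal 2⁻¹ * volume (S ∩ Ioc (-γ) (-γ + (2 : ℕ) * (2 * π))) := by
        rw [hpre, volume_preimage_two_mul_sub,
          measure_congr ((Filter.EventuallyEq.refl _ S).inter Ico_ae_eq_Ioc)]
    _ = ENNReal.ofReal 2⁻¹ * (2 * volume (S ∩ Ioc (-π) (-π + 2 * π))) := by
        rw [volume_inter_Ioc_add_nsmul_period hS (by positivity) hper]; norm_cast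
    _ = ENNReal.ofReal (2 * c) := by
        rw [show -π + 2 * π = π by ring, setOf_cos_lt_cos_inter_Ioc hc₀ hcπ, Real.volume_Ioo,
          sub_neg_eq_add, ← two_mul, ← mul_assoc, ENNReal.ofReal_inv_of_pos two_pos,
          ENNReal.ofReal_ofNat, ENNReal.inv_mul_cancel two_ne_zero ENNReal.ofNat_ne_top, one_mul]

/-- For two unit vectors `v₁ v₂` in `ℝ²` with angle `θ ∈ [0, π]` between them, and a random
line through the origin whose normal direction `h φ = (cos φ, sin φ)` is uniform on the
circle (`φ` uniform on `[0, 2π)`), the probability that both vectors lie strictly on the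
same side of the line (i.e. `⟪v₁, h⟫` and `⟪v₂, h⟫` have the same sign, equivalently their
product is positive) is `1 - θ/π`. -/
theorem same_side_probability_plane
    (v₁ v₂ : EuclideanSpace ℝ (Fin 2)) (hv₁ : ‖v₁‖ = 1) (hv₂ : ‖v₂‖ = 1)
    (θ : ℝ) (hθ : θ = Real.arccos ⟪v₁, v₂⟫_ℝ)
    (h : ℝ → EuclideanSpace ℝ (Fin 2))
    (hdef : ∀ φ : ℝ, h φ = (WithLp.equiv 2 (Fin 2 → ℝ)).symm ![Real.cos φ, Real.sin φ]) :
    (volume {φ ∈ Set.Ico (0 : ℝ) (2 * π) |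
        0 < ⟪v₁, h φ⟫_ℝ * ⟪v₂, h φ⟫_ℝ}).toReal / (2 * π) = 1 - θ / π := by
  obtain ⟨a, rfl⟩ := exists_eq_unitVecAt hv₁
  obtain ⟨b, rfl⟩ := exists_eq_unitVecAt hv₂
  obtain rfl : h = unitVecAt := funext hdef
  rw [inner_unitVecAt] at hθ
  have hθ₀ : 0 ≤ θ := hθ ▸ arccos_nonneg _
  have hθπ : θ ≤ π := hθ ▸ arccos_le_pi _
  have hcosθ : cos θ = cos (a - b) := by
    rw [hθ, cos_arccos (neg_one_le_cos _) (cos_le_one _)]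
  have hsame_side : ∀ φ, 0 < ⟪unitVecAt a, unitVecAt φ⟫_ℝ * ⟪unitVecAt b, unitVecAt φ⟫_ℝ ↔
      cos (π - θ) < cos (2 * φ - (a + b)) := by
    intro φ
    have := two_mul_cos_mul_cos (a - φ) (b - φ)
    rw [show a - φ + (b - φ) = -(2 * φ - (a + b)) by ring, cos_neg, sub_sub_sub_cancel_right,
      ← hcosθ] at this
    rw [inner_unitVecAt, inner_unitVecAt, cos_pi_sub]
    constructor <;> intro <;> linarith
  simp_rw [hsame_side]
  rw [volume_setOf_cos_lt_cos_two_mul_sub (by linarith) (by linarith),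
    ENNReal.toReal_ofReal (by linarith)]
  field_simp
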